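/- arXiv:2204.00301 — 2 statements merged into one kernel-verified Lean document; each statement's English description precedes it below -/
import Mathlib

section
/- Let p be a prime, l ≥ 1 with l | (p-1), q = p·l. Suppose i₁, i₂ ∈ {0,...,p-1} \ {(p-1)/l} and β₁, β₂ ∈ {1,...,l} satisfy (1 + i₁·l)·β₁ ≡ (1 + i₂·l)·β₂ (mod q). Then β₁ = β₂ and i₁ = i₂. -/
/-- `σ` is a cyclic permutation of `Z_q` with a single cycle whose orbit is all of `Z_q`:
every element can be reached from every element by iterating `σ`. -/
def IsFullCycle {q : ℕ} (σ : Equiv.Perm (ZMod q)) : Prop :=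
  ∀ u v : ZMod q, ∃ β : ℕ, (σ ^ β) u = v

/-- `P` is a `(q, l)`-proper set: a set of single-`q`-cycle permutations of `Z_q` such that
for all `(u, v) ∈ Z_q²` and all `β` with `1 ≤ β ≤ l` there is at most one `σ ∈ P`
with `v = σ^β(u)`. -/
def IsProperSet (q l : ℕ) (P : Set (Equiv.Perm (ZMod q))) : Prop :=
  (∀ σ ∈ P, IsFullCycle σ) ∧
  ∀ u v : ZMod q, ∀ β : ℕ, 1 ≤ β → β ≤ l →
    ∀ σ ∈ P, ∀ π ∈ P, (σ ^ β) u = v → (π ^ β) u = v → σ = π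

/-- The `l`-follower set `Ω_l^σ(u) = {σ^β(u) : 1 ≤ β ≤ l}`. -/
def followerSet {q : ℕ} (l : ℕ) (σ : Equiv.Perm (ZMod q)) (u : ZMod q) : Set (ZMod q) :=
  {v | ∃ β : ℕ, 1 ≤ β ∧ β ≤ l ∧ (σ ^ β) u = v}

theorem increments_injective (p l : ℕ) (hp : p.Prime) (hl : 1 ≤ l) (hdvd : l ∣ p - 1)
    (i₁ i₂ β₁ β₂ : ℕ)
    (hi₁ : i₁ < p) (hi₂ : i₂ < p)
    (hne₁ : i₁ ≠ (p - 1) / l) (hne₂ : i₂ ≠ (p - 1) / l)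
    (hβ₁ : 1 ≤ β₁) (hβ₁l : β₁ ≤ l) (hβ₂ : 1 ≤ β₂) (hβ₂l : β₂ ≤ l)
    (hcong : (1 + i₁ * l) * β₁ ≡ (1 + i₂ * l) * β₂ [MOD p * l]) :
    β₁ = β₂ ∧ i₁ = i₂ := by
  have hp2 := hp.two_le
  have hlp : l ≤ p - 1 := Nat.le_of_dvd (by omega) hdvd
  have h : β₁ % l = β₂ % l := by
    have h := hcong.of_dvd (dvd_mul_left l p)
    unfold Nat.ModEq at h
    rwa [show (1 + i₁ * l) * β₁ = β₁ + (i₁ * β₁) * l by ring,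
      show (1 + i₂ * l) * β₂ = β₂ + (i₂ * β₂) * l by ring,
      Nat.add_mul_mod_self_right, Nat.add_mul_mod_self_right] at h
  have hb : β₁ = β₂ := by
    rcases lt_or_eq_of_le hβ₁l with h1 | h1 <;> rcases lt_or_eq_of_le hβ₂l with h2 | h2
    · rwa [Nat.mod_eq_of_lt h1, Nat.mod_eq_of_lt h2] at h
    · subst h2; rw [Nat.mod_eq_of_lt h1, Nat.mod_self] at h; omega
    · subst h1; rw [Nat.mod_self, Nat.mod_eq_of_lt h2] at h; omega
    · omega
  subst hb
  refine ⟨rfl, ?_⟩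
  have hd : ((p : ℤ) * l) ∣ (l * ((i₂ - i₁) * β₁)) := by
    have := hcong.dvd
    push_cast at this ⊢
    convert this using 1
    ring
  rw [mul_comm (p : ℤ) l] at hd
  have hd2 : (p : ℤ) ∣ (i₂ - i₁) * β₁ :=
    (mul_dvd_mul_iff_left (Int.natCast_ne_zero.mpr (by omega))).mp hd
  have hpp : Prime (p : ℤ) := Int.prime_iff_natAbs_prime.mpr (by simpa using hp)
  rcases hpp.dvd_mul.mp hd2 with hcase | hcase
  · rcases eq_or_ne ((i₂ : ℤ) - i₁) 0 with h0 | h0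
    · omega
    · have := Int.le_of_dvd (abs_pos.mpr h0) ((dvd_abs _ _).mpr hcase)
      have : |(i₂ : ℤ) - i₁| < p := by
        rw [abs_lt]; omega
      omega
  · exfalso
    have : (p : ℤ) ≤ β₁ := Int.le_of_dvd (by exact_mod_cast hβ₁) hcase
    have : β₁ ≤ p - 1 := le_trans hβ₁l hlp
    omega
end

section
/- Let p be a prime, l ≥ 1 with l | (p-1), and q = p·l. Then P = { ω_{1+il} : i ∈ {0,...,p-1}, i ≠ (p-1)/l }, where ω_Δ(u) = (u + Δ) mod q, is a (q,l)-proper set of cardinality p - 1. -/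
lemma addRight_pow_apply {q : ℕ} (a : ZMod q) (β : ℕ) (u : ZMod q) :
    ((Equiv.addRight a) ^ β) u = u + β * a := by
  induction β generalizing u with
  | zero => simp
  | succ n ih =>
    rw [pow_succ, Equiv.Perm.mul_apply]
    simp only [Equiv.coe_addRight]
    rw [ih]
    push_cast
    ring

lemma eq_of_dvd_sub (p i j : ℕ) (hi : i < p) (hj : j < p)
    (h : (p : ℤ) ∣ (i : ℤ) - j) : i = j := by
  have habs : |(i : ℤ) - j| < p := by rw [abs_lt]; constructor <;> omega
  have := Int.eq_zero_of_abs_lt_dvd h habs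
  omega

lemma cancel_l (p l : ℕ) (hl : 0 < l) {a : ℤ} (h : ((p * l : ℕ) : ℤ) ∣ a * l) :
    (p : ℤ) ∣ a := by
  obtain ⟨c, hc⟩ := h
  refine ⟨c, ?_⟩
  have hl' : (l : ℤ) ≠ 0 := by exact_mod_cast hl.ne'
  have : a * l = (p * c) * l := by push_cast at hc ⊢; linarith [hc]
  exact mul_right_cancel₀ hl' this

lemma key_inj (p l i j β : ℕ) (hp : p.Prime) (hl : 0 < l) (hi : i < p) (hj : j < p)
    (hβ1 : 0 < β) (hβp : β < p)
    (h : ((β * (1 + i * l) : ℕ) : ZMod (p * l)) = ((β * (1 + j * l) : ℕ) : ZMod (p * l))) :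
    i = j := by
  rw [ZMod.natCast_eq_natCast_iff] at h
  have hd := h.dvd
  have h2 : ((p * l : ℕ) : ℤ) ∣ ((β : ℤ) * ((j : ℤ) - i)) * l := by
    have heq : ((β : ℤ) * ((j : ℤ) - i)) * l
        = ((β * (1 + j * l) : ℕ) : ℤ) - ((β * (1 + i * l) : ℕ) : ℤ) := by push_cast; ring
    rw [heq]; exact hd
  have h3 : (p : ℤ) ∣ (β : ℤ) * ((j : ℤ) - i) := cancel_l p l hl h2
  have hp' : Prime (p : ℤ) := Nat.prime_iff_prime_int.mp hp
  have hnb : ¬ (p : ℤ) ∣ (β : ℤ) := by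
    intro hdd
    have := Nat.le_of_dvd hβ1 (Int.natCast_dvd_natCast.mp hdd)
    omega
  have h4 : (p : ℤ) ∣ (j : ℤ) - i := (hp'.dvd_mul.mp h3).resolve_left hnb
  exact (eq_of_dvd_sub p j i hj hi h4).symm

theorem quasiperfect_construction (p l : ℕ) (hp : p.Prime) (hl : 1 ≤ l) (hdvd : l ∣ p - 1) :
    IsProperSet (p * l) l
      {σ | ∃ i : ℕ, i < p ∧ i ≠ (p - 1) / l ∧
        σ = Equiv.addRight (((1 + i * l : ℕ) : ZMod (p * l)))} ∧
    Set.ncard {σ : Equiv.Perm (ZMod (p * l)) | ∃ i : ℕ, i < p ∧ i ≠ (p - 1) / l ∧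
        σ = Equiv.addRight (((1 + i * l : ℕ) : ZMod (p * l)))} = p - 1 := by
  have hp2 := hp.two_le
  have hl0 : 0 < l := hl
  have hlp : l < p := by
    have := Nat.le_of_dvd (by omega) hdvd
    omega
  have hk : 1 + ((p - 1) / l) * l = p := by
    have := Nat.div_mul_cancel hdvd
    omega
  have hklt : (p - 1) / l < p := by
    have := Nat.div_le_self (p - 1) l
    omega
  haveI : NeZero (p * l) := ⟨(Nat.mul_pos hp.pos hl0).ne'⟩
  -- coprimality of 1 + i*l with p*l for good i
  have hcop : ∀ i : ℕ, i < p → i ≠ (p - 1) / l → Nat.Coprime (1 + i * l) (p * l) := by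
    intro i hi hik
    have hcl : Nat.Coprime (1 + i * l) l :=
      (Nat.coprime_add_mul_right_left 1 l i).mpr (Nat.coprime_one_left l)
    have hcp : Nat.Coprime (1 + i * l) p := by
      rw [Nat.coprime_comm]
      refine (hp.coprime_iff_not_dvd).mpr ?_
      intro hdd
      have hdd2 : p ∣ 1 + ((p - 1) / l) * l := by rw [hk]
      have hdi : (p : ℤ) ∣ ((i : ℤ) - ((p - 1) / l : ℕ)) * l := by
        have heq : ((i : ℤ) - ((p - 1) / l : ℕ)) * l
            = ((1 + i * l : ℕ) : ℤ) - ((1 + ((p - 1) / l) * l : ℕ) : ℤ) := by push_cast; ring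
        rw [heq]
        exact dvd_sub (Int.natCast_dvd_natCast.mpr hdd) (Int.natCast_dvd_natCast.mpr hdd2)
      have hp' : Prime (p : ℤ) := Nat.prime_iff_prime_int.mp hp
      have hnl : ¬ (p : ℤ) ∣ (l : ℤ) := by
        intro hdd3
        have := Nat.le_of_dvd hl0 (Int.natCast_dvd_natCast.mp hdd3)
        omega
      have := (hp'.dvd_mul.mp hdi).resolve_right hnl
      exact hik (eq_of_dvd_sub p i ((p - 1) / l) hi hklt this)
    exact Nat.Coprime.mul_right hcp hcl
  constructor
  · constructor
    · -- full cycle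
      rintro σ ⟨i, hi, hik, rfl⟩ u v
      obtain ⟨w, hw⟩ := (ZMod.isUnit_iff_coprime _ _).mpr (hcop i hi hik)
      refine ⟨(((w⁻¹ : (ZMod (p * l))ˣ) : ZMod (p * l)) * (v - u)).val, ?_⟩
      rw [addRight_pow_apply, ZMod.natCast_val, ZMod.cast_id, ← hw]
      have h1 : ((w⁻¹ : (ZMod (p * l))ˣ) : ZMod (p * l)) * (w : ZMod (p * l)) = 1 := w.inv_mul
      linear_combination (v - u) * h1
    · -- properness
      rintro u v β hβ1 hβl σ ⟨i, hi, hik, rfl⟩ π ⟨j, hj, hjk, rfl⟩ h1 h2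
      rw [addRight_pow_apply] at h1 h2
      have hcast : ((β * (1 + i * l) : ℕ) : ZMod (p * l)) = ((β * (1 + j * l) : ℕ) : ZMod (p * l)) := by
        push_cast at h1 h2 ⊢
        linear_combination h1 - h2
      have := key_inj p l i j β hp hl0 hi hj hβ1 (by omega) hcast
      subst this
      rfl
  · -- cardinality
    have hset : {σ : Equiv.Perm (ZMod (p * l)) | ∃ i : ℕ, i < p ∧ i ≠ (p - 1) / l ∧
          σ = Equiv.addRight (((1 + i * l : ℕ) : ZMod (p * l)))}
        = (fun i : ℕ => Equiv.addRight (((1 + i * l : ℕ) : ZMod (p * l)))) ''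
          {i : ℕ | i < p ∧ i ≠ (p - 1) / l} := by
      ext σ
      constructor
      · rintro ⟨i, h1, h2, h3⟩; exact ⟨i, ⟨h1, h2⟩, h3.symm⟩
      · rintro ⟨i, ⟨h1, h2⟩, h3⟩; exact ⟨i, h1, h2, h3.symm⟩
    have hinj : Set.InjOn (fun i : ℕ => Equiv.addRight (((1 + i * l : ℕ) : ZMod (p * l))))
        {i : ℕ | i < p ∧ i ≠ (p - 1) / l} := by
      rintro i ⟨hi, -⟩ j ⟨hj, -⟩ hfeq
      have h0 : ((1 + i * l : ℕ) : ZMod (p * l)) = ((1 + j * l : ℕ) : ZMod (p * l)) := by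
        have := congrArg (fun e : Equiv.Perm (ZMod (p * l)) => e 0) hfeq
        simpa using this
      refine key_inj p l i j 1 hp hl0 hi hj one_pos (by omega) ?_
      simpa using h0
    rw [hset, Set.ncard_image_of_injOn hinj]
    have hT : {i : ℕ | i < p ∧ i ≠ (p - 1) / l}
        = ↑((Finset.range p).erase ((p - 1) / l)) := by
      ext x
      simp [Finset.mem_erase, Finset.mem_range, and_comm]
    rw [hT, Set.ncard_coe_finset,
      Finset.card_erase_of_mem (Finset.mem_range.mpr hklt), Finset.card_range]
end
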